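/- Let Fib be the infinite Fibonacci word, F_k the Fibonacci numbers (F_0 = F_1 = 1, F_2 = 2, F_3 = 3, F_4 = 5, ...), Cov_Fib[ℓ] the length of the shortest cover of Fib[0..ℓ), and let S = {1, 2, 3, 5} ∪ {F_k − 1 : k ≥ 4} ∪ {2F_k − 1 : k ≥ 4}. Then: (a) for every ℓ ≥ 1, the prefix Fib[0..ℓ) is superprimitive (i.e., Cov_Fib[ℓ] = ℓ) if and only if ℓ ∈ S; and (b) for every ℓ ≥ 1, Cov_Fib[ℓ] ∈ S. -/

import Mathlib

section Defs

variable {α : Type*}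

/-- `C` occurs in `T` at starting position `i`. -/
def OccursAt (C T : List α) (i : ℕ) : Prop :=
  i + C.length ≤ T.length ∧ (T.drop i).take C.length = C

/-- `C` is a cover of `T`: `C` occurs in `T` and every position of `T`
lies within an occurrence of `C`. -/
def IsCover (C T : List α) : Prop :=
  (∃ i, OccursAt C T i) ∧
    ∀ q, q < T.length → ∃ i, OccursAt C T i ∧ i ≤ q ∧ q < i + C.length

/-- A border of `T` is both a prefix and a suffix of `T`. -/
def IsBorder (B T : List α) : Prop := B <+: T ∧ B <:+ T

/-- `p` is a period of `U`: `U[i] = U[i+p]` for all `0 ≤ i < |U| - p`. -/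
def IsPeriod (p : ℕ) (U : List α) : Prop :=
  0 < p ∧ ∀ i, i + p < U.length → U[i]? = U[i + p]?

/-- `U` is aperiodic: its smallest period `p` satisfies `2p > |U|`
(equivalently, every period `p` of `U` satisfies `2p > |U|`). -/
def StrAperiodic (U : List α) : Prop := ∀ p, IsPeriod p U → U.length < 2 * p

/-- A nonempty string `X` is primitive if `X = Y^t` implies `t = 1`. -/
def StrPrimitive (X : List α) : Prop :=
  X ≠ [] ∧ ∀ (Y : List α) (t : ℕ), X = (List.replicate t Y).flatten → t = 1

/-- A string is superprimitive if it has no proper cover. -/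
def Superprimitive (T : List α) : Prop :=
  ¬ ∃ C : List α, IsCover C T ∧ C.length < T.length

/-- The length of the shortest cover of `T`. -/
noncomputable def covLen (T : List α) : ℕ :=
  sInf {c | ∃ C : List α, C.length = c ∧ IsCover C T}

/-- `{a, a+p, ..., a+(t-1)p}` is a maximal arithmetic progression with
difference `p` inside the set `S`. -/
def MaxProg (S : Set ℕ) (p a t : ℕ) : Prop :=
  0 < t ∧ (∀ r, r < t → a + r * p ∈ S) ∧ (∀ b, b + p = a → b ∉ S) ∧ a + t * p ∉ S

end Defs

/-- Fibonacci strings over `Bool` (`true` = a, `false` = b):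
`Fib_0 = b`, `Fib_1 = a`, `Fib_m = Fib_{m-1} Fib_{m-2}`. -/
def fibWord : ℕ → List Bool
  | 0 => [false]
  | 1 => [true]
  | (m + 2) => fibWord (m + 1) ++ fibWord m

/-- Fibonacci numbers `F_k = |Fib_k|`: `F_0 = F_1 = 1`, `F_2 = 2`, `F_3 = 3`, ... -/
def F (k : ℕ) : ℕ := (fibWord k).length

/-- The `n`-th letter of the infinite Fibonacci word (each `Fib_m`, `m ≥ 1`,
is a prefix of the infinite word, and `F_{n+2} > n`). -/
def fibInf (n : ℕ) : Bool := (fibWord (n + 2)).getD n false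

/-- The length-`ℓ` prefix `Fib[0..ℓ)` of the infinite Fibonacci word. -/
def fibPrefix (ℓ : ℕ) : List Bool := (List.range ℓ).map fibInf

/-- `Cov_Fib[ℓ]`: the length of the shortest cover of `Fib[0..ℓ)`. -/
noncomputable def covFib (ℓ : ℕ) : ℕ := covLen (fibPrefix ℓ)

/-- `S = {1,2,3,5} ∪ {F_k - 1 : k ≥ 4} ∪ {2F_k - 1 : k ≥ 4}`. -/
def SFib : Set ℕ :=
  ({1, 2, 3, 5} : Set ℕ) ∪ {n | ∃ k, 4 ≤ k ∧ n = F k - 1} ∪ {n | ∃ k, 4 ≤ k ∧ n = 2 * F k - 1}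

/-!
Let `φ` be the Fibonacci morphism `a ↦ ab, b ↦ a`. `Fib` is its fixed point, so for every `k` it
factors into blocks `φ^k(a) = Fib_{k+1}` and `φ^k(b) = Fib_k`. Because `Fib_{k+1} Fib_k` and
`Fib_k Fib_{k+1}` differ only by a swap of their last two letters, the prefix of length
`F_{k+1} - 1` occurs only at starts of `k`-blocks; and a block start in `[F_{j+1}, F_{j+2})` is
`F_{j+1}` plus a smaller block start (a Zeckendorf step).

Note that `ℓ ∈ S` iff `ℓ + 1` is some `F_m` or `2 F_m`. Suppose `Fib[0..c)`, with
`F_{k+1} ≤ c + 1 < F_{k+2}`, is a proper cover of `Fib[0..ℓ)`. All its occurrences start at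
`k`-block starts `x`; the one covering position `c` forces `c + 1 > F_{k+1}`, and the last one puts
`ℓ + 1` strictly between `x + F_{k+1}` and `x + F_{k+2}`. Repeated Zeckendorf steps show that no
`F_m`, and for `x > 0` no `2 F_m`, lies there. Conversely, if `ℓ + 1` is neither, then
`ℓ = F_{k+1} + c` or `ℓ = F_{k+2} + c` with `F_{k+1} ≤ c ≤ F_{k+2} - 2`, and the periods `F_{k+1}`
and `F_{k+2}` of long prefixes of `Fib` make `Fib[0..c)` a cover with two or three occurrences.
Part (b) follows because a shortest cover is superprimitive.
-/

section Covers

variable {α : Type*} {C D T : List α}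

theorem OccursAt.trans {i j : ℕ} (hC : OccursAt C T i) (hD : OccursAt D C j) :
    OccursAt D T (i + j) := by
  obtain ⟨hi, hCT⟩ := hC
  obtain ⟨hj, hDC⟩ := hD
  refine ⟨by omega, ?_⟩
  conv_rhs => rw [← hDC, ← hCT]
  rw [List.drop_take, List.drop_drop, List.take_take, min_eq_left (by omega)]

theorem IsCover.refl (T : List α) : IsCover T T :=
  have h : OccursAt T T 0 := ⟨by omega, by simp⟩
  ⟨⟨0, h⟩, fun _ hq => ⟨0, h, Nat.zero_le _, by omega⟩⟩

theorem IsCover.trans (hD : IsCover D C) (hC : IsCover C T) : IsCover D T := by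
  obtain ⟨⟨i₀, hi₀⟩, hCT⟩ := hC
  obtain ⟨⟨j₀, hj₀⟩, hDC⟩ := hD
  refine ⟨⟨i₀ + j₀, hi₀.trans hj₀⟩, fun q hq => ?_⟩
  obtain ⟨i, hi, hiq, hqi⟩ := hCT q hq
  obtain ⟨j, hj, hjq, hqj⟩ := hDC (q - i) (by omega)
  exact ⟨i + j, hi.trans hj, by omega, by omega⟩

theorem IsCover.occursAt_zero (h : IsCover C T) (hT : T ≠ []) :
    OccursAt C T 0 ∧ 0 < C.length := by
  obtain ⟨i, hi, hi0, h0i⟩ := h.2 0 (List.length_pos_iff.mpr hT)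
  obtain rfl : i = 0 := by omega
  exact ⟨hi, by omega⟩

theorem IsCover.prefix (h : IsCover C T) (hT : T ≠ []) : C <+: T := by
  obtain ⟨⟨-, hCT⟩, -⟩ := h.occursAt_zero hT
  rw [List.drop_zero] at hCT
  exact List.prefix_iff_eq_take.mpr hCT.symm

theorem covLen_le (h : IsCover C T) : covLen T ≤ C.length :=
  Nat.sInf_le ⟨C, rfl, h⟩

theorem exists_isCover_length_eq_covLen (T : List α) :
    ∃ C, IsCover C T ∧ C.length = covLen T := by
  obtain ⟨C, hlen, hC⟩ := Nat.sInf_mem (s := {c | ∃ C : List α, C.length = c ∧ IsCover C T})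
    ⟨T.length, T, rfl, IsCover.refl T⟩
  exact ⟨C, hC, hlen⟩

theorem superprimitive_iff_covLen_eq : Superprimitive T ↔ covLen T = T.length := by
  refine ⟨fun h => ?_, fun h ⟨C, hC, hlt⟩ => ?_⟩
  · obtain ⟨C, hC, hlen⟩ := exists_isCover_length_eq_covLen T
    have := covLen_le (IsCover.refl T)
    by_contra hne
    exact h ⟨C, hC, by omega⟩
  · have := covLen_le hC
    omega

theorem IsCover.superprimitive_of_length_eq_covLen (hC : IsCover C T)
    (hlen : C.length = covLen T) : Superprimitive C := fun ⟨D, hD, hlt⟩ => by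
  have := covLen_le (hD.trans hC)
  omega

end Covers

theorem F_add_two (k : ℕ) : F (k + 2) = F (k + 1) + F k := by
  simp [F, fibWord]

theorem F_eq_fib : ∀ k, F k = Nat.fib (k + 1)
  | 0 => rfl
  | 1 => rfl
  | k + 2 => by rw [F_add_two, F_eq_fib k, F_eq_fib (k + 1), Nat.fib_add_two (n := k + 1)]; omega

theorem F_pos (k : ℕ) : 0 < F k := by
  rw [F_eq_fib]
  exact Nat.fib_pos.mpr k.succ_pos

theorem F_mono : Monotone F := fun a b h => by
  simpa only [F_eq_fib] using Nat.fib_mono (Nat.succ_le_succ h)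

theorem lt_F_add_two (n : ℕ) : n < F (n + 2) := by
  have := Nat.le_fib_add_one (n + 2 + 1)
  rw [F_eq_fib]
  omega

theorem exists_le_lt_succ {f : ℕ → ℕ} {n : ℕ} (h₀ : f 0 ≤ n) (hf : ∃ k, n < f k) :
    ∃ k, f k ≤ n ∧ n < f (k + 1) := by
  classical
  have hpos : Nat.find hf ≠ 0 := fun h => by
    have := Nat.find_spec hf
    rw [h] at this
    omega
  obtain ⟨k, hk⟩ := Nat.exists_eq_add_one_of_ne_zero hpos
  exact ⟨k, not_lt.mp (Nat.find_min hf (by omega)), hk ▸ Nat.find_spec hf⟩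

theorem fibWord_prefix_fibWord {a b : ℕ} (ha : 1 ≤ a) (hab : a ≤ b) : fibWord a <+: fibWord b := by
  induction b, hab using Nat.le_induction with
  | base => exact List.prefix_rfl
  | succ n hn ih =>
    obtain ⟨m, rfl⟩ : ∃ m, n = m + 1 := ⟨n - 1, by omega⟩
    exact ih.trans (List.prefix_append _ _)

@[simp] theorem fibPrefix_length (ℓ : ℕ) : (fibPrefix ℓ).length = ℓ := by
  simp [fibPrefix]

theorem fibPrefix_getElem {ℓ i : ℕ} (h : i < (fibPrefix ℓ).length) :
    (fibPrefix ℓ)[i] = fibInf i := by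
  simp [fibPrefix]

theorem fibPrefix_succ (n : ℕ) : fibPrefix (n + 1) = fibPrefix n ++ [fibInf n] := by
  simp [fibPrefix, List.range_succ]

theorem fibPrefix_take (a b : ℕ) : (fibPrefix b).take a = fibPrefix (min a b) := by
  simp [fibPrefix, ← List.map_take, List.take_range]

theorem fibPrefix_prefix {a b : ℕ} (h : a ≤ b) : fibPrefix a <+: fibPrefix b := by
  simpa [fibPrefix_take, h] using List.take_prefix a (fibPrefix b)

theorem eq_fibPrefix_of_prefix {w : List Bool} {n : ℕ} (h : w <+: fibPrefix n) :
    w = fibPrefix w.length := by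
  have hw := List.prefix_iff_eq_take.mp h
  rwa [fibPrefix_take, min_eq_left (by simpa using h.length_le)] at hw

theorem fibInf_eq_getElem_fibWord {m n : ℕ} (hm : 1 ≤ m) (hn : n < F m) :
    fibInf n = (fibWord m)[n]'hn := by
  have hn' : n < (fibWord (n + 2)).length := lt_F_add_two n
  rw [fibInf, List.getD_eq_getElem _ _ hn']
  rcases le_total m (n + 2) with h | h
  · exact ((fibWord_prefix_fibWord hm h).getElem hn).symm
  · exact (fibWord_prefix_fibWord (by omega) h).getElem hn'

theorem fibPrefix_F {m : ℕ} (hm : 1 ≤ m) : fibPrefix (F m) = fibWord m :=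
  List.ext_getElem (by simp [F]) fun i h _ => by
    rw [fibPrefix_getElem h]
    exact fibInf_eq_getElem_fibWord hm (by simpa using h)

theorem fibPrefix_prefix_fibWord {i r : ℕ} (hi : i < F r) : fibPrefix i <+: fibWord r := by
  rcases Nat.eq_zero_or_pos r with rfl | hr
  · obtain rfl : i = 0 := by simpa [F, fibWord] using hi
    simp [fibPrefix]
  · rw [← fibPrefix_F hr]
    exact fibPrefix_prefix hi.le

theorem fibPrefix_F_succ_add {r i : ℕ} (hi : i < F r) :
    fibPrefix (F (r + 1) + i) = fibWord (r + 1) ++ fibPrefix i := by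
  have h : fibWord (r + 1) ++ fibPrefix i <+: fibPrefix (F (r + 2)) := by
    rw [fibPrefix_F (by omega), fibWord]
    exact (List.prefix_append_right_inj _).mpr (fibPrefix_prefix_fibWord hi)
  have := eq_fibPrefix_of_prefix h
  rw [List.length_append, fibPrefix_length] at this
  exact this.symm

theorem fibInf_eq_getElem_of_prefix {w : List Bool} {n i : ℕ} (h : w <+: fibPrefix n)
    (hi : i < w.length) : fibInf i = w[i] := by
  rw [h.getElem hi, fibPrefix_getElem]

theorem fibInf_add_eq_getElem_of_prefix {u v : List Bool} {n i : ℕ} (h : u ++ v <+: fibPrefix n)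
    (hi : i < v.length) : fibInf (u.length + i) = v[i] := by
  rw [fibInf_eq_getElem_of_prefix h (by simp; omega), List.getElem_append_right (by omega)]
  simp

theorem fibWord_head {m : ℕ} (hm : 1 ≤ m) (h : 0 < (fibWord m).length) : (fibWord m)[0] = true := by
  rw [← fibInf_eq_getElem_fibWord hm h]
  rfl

theorem fibWord_add_three (k : ℕ) :
    fibWord (k + 3) = fibWord (k + 1) ++ (fibWord k ++ fibWord (k + 1)) := by
  simp [fibWord]

theorem fibWord_near_commute {k : ℕ} (hk : 1 ≤ k) : ∃ (w : List Bool) (x y : Bool), x ≠ y ∧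
    fibWord (k + 2) = w ++ [x, y] ∧ fibWord k ++ fibWord (k + 1) = w ++ [y, x] := by
  induction k, hk using Nat.le_induction with
  | base => exact ⟨[true], false, true, by decide, rfl, rfl⟩
  | succ k hk ih =>
    obtain ⟨w, x, y, hxy, h₁, h₂⟩ := ih
    refine ⟨fibWord (k + 1) ++ w, y, x, hxy.symm, ?_, ?_⟩
    · rw [show k + 1 + 2 = k + 3 from rfl, fibWord_add_three, h₂, List.append_assoc]
    · rw [show fibWord (k + 1 + 1) = fibWord (k + 2) from rfl, h₁, List.append_assoc]

def PrefixOccursAt (c s : ℕ) : Prop := ∀ i < c, fibInf (s + i) = fibInf i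

theorem PrefixOccursAt.mono {c c' s : ℕ} (h : PrefixOccursAt c s) (hc : c' ≤ c) :
    PrefixOccursAt c' s :=
  fun i hi => h i (by omega)

theorem occursAt_fibPrefix_iff {c ℓ s : ℕ} :
    OccursAt (fibPrefix c) (fibPrefix ℓ) s ↔ s + c ≤ ℓ ∧ PrefixOccursAt c s := by
  simp only [OccursAt, fibPrefix_length]
  refine and_congr_right fun hsc => ⟨fun h i hi => ?_, fun h => ?_⟩
  · have := List.getElem_of_eq h (i := i) (by simp; omega)
    simpa [fibPrefix_getElem] using this
  · refine List.ext_getElem (by simp; omega) fun i _ hi => ?_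
    simp only [List.getElem_take, List.getElem_drop, fibPrefix_getElem]
    exact h i (by simpa using hi)

theorem prefixOccursAt_of_prefix {u v : List Bool} {m n : ℕ} (huv : u ++ v <+: fibPrefix m)
    (hv : v <+: fibPrefix n) : PrefixOccursAt v.length u.length := fun i hi => by
  rw [fibInf_add_eq_getElem_of_prefix huv hi, fibInf_eq_getElem_of_prefix hv hi]

theorem prefixOccursAt_F_succ {k : ℕ} (hk : 1 ≤ k) :
    PrefixOccursAt (F (k + 2) - 2) (F (k + 1)) := by
  obtain ⟨w, x, y, -, h₁, h₂⟩ := fibWord_near_commute hk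
  have hw : F (k + 2) - 2 = w.length := by rw [F, h₁]; simp
  rw [hw]
  refine prefixOccursAt_of_prefix (u := fibWord (k + 1)) (m := F (k + 3)) (n := F (k + 2)) ?_ ?_
  · rw [fibPrefix_F (by omega), fibWord_add_three, h₂]
    exact (List.prefix_append_right_inj _).mpr (List.prefix_append _ _)
  · rw [fibPrefix_F (by omega), h₁]
    exact List.prefix_append _ _

theorem prefixOccursAt_F_add_two {k : ℕ} (hk : 1 ≤ k) :
    PrefixOccursAt (F (k + 3) - 2) (F (k + 2)) := by
  obtain ⟨w, x, y, -, h₁, h₂⟩ := fibWord_near_commute hk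
  have hw : F (k + 3) - 2 = (fibWord (k + 1) ++ w).length := by
    rw [F_add_two]
    simp [F, h₁]
    omega
  rw [hw]
  refine prefixOccursAt_of_prefix (u := fibWord (k + 2)) (m := F (k + 4)) (n := F (k + 3)) ?_ ?_
  · have h₄ : fibWord (k + 4) = fibWord (k + 2) ++ (fibWord (k + 1) ++ (w ++ [x, y])) := by
      rw [← h₁]
      exact fibWord_add_three (k + 1)
    rw [fibPrefix_F (by omega), h₄, ← List.append_assoc (fibWord (k + 1))]
    exact (List.prefix_append_right_inj _).mpr (List.prefix_append _ _)
  · rw [fibPrefix_F (by omega), fibWord_add_three, h₂]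
    exact (List.prefix_append_right_inj _).mpr (List.prefix_append _ _)

/-- The `k`-th power of the Fibonacci morphism `φ : a ↦ ab, b ↦ a`, so `φ^k(a) = Fib_{k+1}` and
`φ^k(b) = Fib_k`. -/
def phiPow (k : ℕ) (w : List Bool) : List Bool := w.flatMap fun c => fibWord (k + c.toNat)

theorem phiPow_append (k : ℕ) (u v : List Bool) : phiPow k (u ++ v) = phiPow k u ++ phiPow k v :=
  List.flatMap_append

theorem phiPow_fibWord (k : ℕ) : ∀ m, phiPow k (fibWord m) = fibWord (m + k)
  | 0 => by simp [phiPow, fibWord]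
  | 1 => by simp [phiPow, fibWord, Nat.add_comm]
  | m + 2 => by
    rw [fibWord, phiPow_append, phiPow_fibWord k (m + 1), phiPow_fibWord k m,
      show m + 2 + k = m + k + 2 by omega, fibWord, Nat.add_right_comm]

theorem phiPow_phiPow_one (k : ℕ) (w : List Bool) : phiPow k (phiPow 1 w) = phiPow (k + 1) w := by
  simp only [phiPow, List.flatMap_assoc]
  congr 1
  funext c
  rw [← phiPow, phiPow_fibWord]
  congr 1
  omega

/-- `Fib` factors into the blocks `φ^k(Fib[0]), φ^k(Fib[1]), …`; the `n`-th one starts here. -/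
def blockStart (k n : ℕ) : ℕ := (phiPow k (fibPrefix n)).length

/-- `Fib` is the fixed point of `φ`. -/
theorem fibPrefix_blockStart (k n : ℕ) : fibPrefix (blockStart k n) = phiPow k (fibPrefix n) := by
  obtain ⟨t, ht⟩ := fibPrefix_prefix_fibWord (lt_F_add_two n)
  have h : phiPow k (fibPrefix n) <+: fibPrefix (F (n + 2 + k)) := by
    rw [fibPrefix_F (by omega), ← phiPow_fibWord, ← ht, phiPow_append]
    exact List.prefix_append _ _
  exact (eq_fibPrefix_of_prefix h).symm

theorem fibPrefix_blockStart_succ (k n : ℕ) :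
    fibPrefix (blockStart k (n + 1)) =
      fibPrefix (blockStart k n) ++ fibWord (k + (fibInf n).toNat) := by
  rw [fibPrefix_blockStart, fibPrefix_blockStart, fibPrefix_succ, phiPow_append]
  simp [phiPow]

theorem blockStart_succ (k n : ℕ) :
    blockStart k (n + 1) = blockStart k n + F (k + (fibInf n).toNat) := by
  simpa [F] using congrArg List.length (fibPrefix_blockStart_succ k n)

@[simp] theorem blockStart_zero (k : ℕ) : blockStart k 0 = 0 := by
  simp [blockStart, fibPrefix, phiPow]

theorem blockStart_one (k : ℕ) : blockStart k 1 = F (k + 1) := by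
  rw [blockStart_succ, blockStart_zero, Nat.zero_add]
  rfl

theorem blockStart_F (k : ℕ) {m : ℕ} (hm : 1 ≤ m) : blockStart k (F m) = F (m + k) := by
  rw [blockStart, fibPrefix_F hm, phiPow_fibWord]
  rfl

theorem blockStart_strictMono (k : ℕ) : StrictMono (blockStart k) :=
  strictMono_nat_of_lt_succ fun n => by
    rw [blockStart_succ]
    have := F_pos (k + (fibInf n).toNat)
    omega

theorem blockStart_succ_eq (k n : ℕ) : blockStart (k + 1) n = blockStart k (blockStart 1 n) := by
  rw [blockStart, blockStart, fibPrefix_blockStart, phiPow_phiPow_one]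

theorem exists_blockStart_le_lt (k s : ℕ) : ∃ n, blockStart k n ≤ s ∧ s < blockStart k (n + 1) :=
  exists_le_lt_succ (by simp) ⟨s + 1, (blockStart_strictMono k).le_apply⟩

theorem F_succ_le_blockStart {k n : ℕ} (h : 0 < blockStart k n) : F (k + 1) ≤ blockStart k n := by
  rw [← blockStart_one]
  refine (blockStart_strictMono k).monotone (Nat.one_le_iff_ne_zero.mpr ?_)
  rintro rfl
  simp at h

theorem fibInf_blockStart {k : ℕ} (hk : 1 ≤ k) (n : ℕ) : fibInf (blockStart k n) = true := by
  have h := fibInf_add_eq_getElem_of_prefix (n := blockStart k (n + 1)) (i := 0)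
    ⟨[], by rw [List.append_nil, fibPrefix_blockStart_succ]⟩
    (by simpa [F] using F_pos (k + (fibInf n).toNat))
  rw [fibPrefix_length, Nat.add_zero] at h
  exact h.trans (fibWord_head (by omega) _)

theorem blockStart_one_cases (s : ℕ) : (∃ p, s = blockStart 1 p) ∨
    ∃ p, fibInf p = true ∧ s = blockStart 1 p + 1 ∧ s + 1 = blockStart 1 (p + 1) := by
  obtain ⟨p, h₁, h₂⟩ := exists_blockStart_le_lt 1 s
  rcases h₁.eq_or_lt with h | h
  · exact Or.inl ⟨p, h.symm⟩
  rw [blockStart_succ] at h₂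
  cases hp : fibInf p
  · rw [hp, show F (1 + false.toNat) = 1 from rfl] at h₂
    omega
  · have h₃ : blockStart 1 (p + 1) = blockStart 1 p + 2 := by
      rw [blockStart_succ, hp]
      rfl
    rw [hp, show F (1 + true.toNat) = 2 from rfl] at h₂
    exact Or.inr ⟨p, hp, by omega, by omega⟩

theorem fibInf_blockStart_one_add_one {p : ℕ} (hp : fibInf p = true) :
    fibInf (blockStart 1 p + 1) = false := by
  have h := fibInf_add_eq_getElem_of_prefix (n := blockStart 1 (p + 1)) (i := 1)
    ⟨[], by rw [List.append_nil, fibPrefix_blockStart_succ, hp]⟩ (by decide)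
  rwa [fibPrefix_length] at h

theorem exists_eq_blockStart_one_of_fibInf {s : ℕ} (h : fibInf s = true) :
    ∃ p, s = blockStart 1 p := by
  rcases blockStart_one_cases s with hs | ⟨p, hp, rfl, -⟩
  · exact hs
  · rw [fibInf_blockStart_one_add_one hp] at h
    cases h

theorem fibInf_succ_of_fibInf_eq_false {s : ℕ} (h : fibInf s = false) : fibInf (s + 1) = true := by
  rcases blockStart_one_cases s with ⟨p, rfl⟩ | ⟨p, -, -, hs⟩
  · rw [fibInf_blockStart le_rfl] at h
    cases h
  · rw [hs]
    exact fibInf_blockStart le_rfl _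

/-- Here the factor at `blockStart k n` is `φ^k(ba) = Fib_k Fib_{k+1}`, which differs from the
prefix `Fib_{k+2} = Fib_{k+1} Fib_k` at position `F (k+2) - 2`. -/
theorem not_prefixOccursAt_blockStart_of_fibInf_eq_false {k n : ℕ} (hk : 1 ≤ k)
    (hn : fibInf n = false) : ¬ PrefixOccursAt (F (k + 2) - 1) (blockStart k n) := fun h => by
  obtain ⟨w, x, y, hxy, h₁, h₂⟩ := fibWord_near_commute hk
  have hw : w.length + 2 = F (k + 2) := by rw [F, h₁]; simp
  have hy := fibInf_add_eq_getElem_of_prefix (u := fibPrefix (blockStart k n) ++ w)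
    (v := [y, x]) (n := blockStart k (n + 2)) (i := 0) ⟨[], by
      rw [List.append_nil, fibPrefix_blockStart_succ, fibPrefix_blockStart_succ, hn,
        fibInf_succ_of_fibInf_eq_false hn, Bool.toNat_false, Bool.toNat_true, Nat.add_zero]
      simp only [List.append_assoc, h₂]⟩ (by simp)
  have hx := fibInf_add_eq_getElem_of_prefix (u := w) (v := [x, y]) (n := F (k + 2)) (i := 0)
    ⟨[], by rw [List.append_nil, fibPrefix_F (by omega), h₁]⟩ (by simp)
  simp only [List.length_append, fibPrefix_length, Nat.add_zero, List.getElem_cons_zero] at hx hy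
  exact hxy (hx.symm.trans ((h w.length (by omega)).symm.trans hy))

theorem exists_eq_blockStart_of_prefixOccursAt {k s : ℕ} (hk : 1 ≤ k)
    (h : PrefixOccursAt (F (k + 1) - 1) s) : ∃ n, s = blockStart k n := by
  induction k, hk using Nat.le_induction generalizing s with
  | base => exact exists_eq_blockStart_one_of_fibInf (h 0 (by decide))
  | succ k hk ih =>
    obtain ⟨n, rfl⟩ := ih (h.mono (by have : F (k + 1) ≤ F (k + 1 + 1) := F_mono (by omega); omega))
    cases hn : fibInf n
    · exact absurd h (not_prefixOccursAt_blockStart_of_fibInf_eq_false hk hn)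
    · obtain ⟨p, rfl⟩ := exists_eq_blockStart_one_of_fibInf hn
      exact ⟨p, (blockStart_succ_eq k p).symm⟩

theorem exists_blockStart_eq_F_add {k j n : ℕ} (hkj : k ≤ j) (h₁ : F (j + 1) ≤ blockStart k n)
    (h₂ : blockStart k n < F (j + 2)) :
    ∃ n', blockStart k n = F (j + 1) + blockStart k n' ∧ blockStart k n' < F j := by
  obtain ⟨r, rfl⟩ : ∃ r, j = r + k := ⟨j - k, by omega⟩
  have e₁ : blockStart k (F (r + 1)) = F (r + k + 1) := by
    rw [blockStart_F k (by omega), Nat.add_right_comm]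
  have e₂ : blockStart k (F (r + 2)) = F (r + k + 2) := by
    rw [blockStart_F k (by omega), show r + 2 + k = r + k + 2 by omega]
  have hn₁ : F (r + 1) ≤ n := (blockStart_strictMono k).le_iff_le.mp (e₁ ▸ h₁)
  have hn₂ : n < F (r + 2) := (blockStart_strictMono k).lt_iff_lt.mp (e₂ ▸ h₂)
  have hsplit := fibPrefix_F_succ_add (r := r) (i := n - F (r + 1))
    (by rw [F_add_two] at hn₂; omega)
  rw [Nat.add_sub_cancel' hn₁] at hsplit
  have hblock : blockStart k n = F (r + k + 1) + blockStart k (n - F (r + 1)) := by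
    rw [blockStart, hsplit, phiPow_append, List.length_append, phiPow_fibWord, Nat.add_right_comm]
    rfl
  refine ⟨n - F (r + 1), hblock, ?_⟩
  rw [F_add_two] at h₂
  omega

theorem F_notMem_Ioo_blockStart (m k n : ℕ) :
    F m ∉ Set.Ioo (blockStart k n + F (k + 1)) (blockStart k n + F (k + 2)) := by
  induction m using Nat.strong_induction_on generalizing n with
  | _ m ih =>
    rintro ⟨hlo, hhi⟩
    have hk₁ : F k ≤ F (k + 1) := F_mono k.le_succ
    have hk₂ : F (k + 2) = F (k + 1) + F k := F_add_two k
    rcases Nat.eq_zero_or_pos (blockStart k n) with h₀ | hpos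
    · rw [h₀] at hlo hhi
      rcases le_or_gt m (k + 1) with hm | hm
      · have := F_mono hm
        omega
      · have := F_mono (show k + 2 ≤ m by omega)
        omega
    have hx := F_succ_le_blockStart hpos
    rcases lt_trichotomy m (k + 3) with hm | rfl | hm
    · have := F_mono (show m ≤ k + 2 by omega)
      omega
    · have hk₃ : F (k + 3) = F (k + 2) + F (k + 1) := F_add_two (k + 1)
      obtain ⟨n', he, hlt⟩ := exists_blockStart_eq_F_add le_rfl hx (by omega)
      rcases Nat.eq_zero_or_pos (blockStart k n') with h₀' | hpos'
      · omega
      · have := F_succ_le_blockStart hpos'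
        omega
    · obtain ⟨r, rfl⟩ : ∃ r, m = r + 2 := ⟨m - 2, by omega⟩
      have hr : F (r + 2) = F (r + 1) + F r := F_add_two r
      have := F_mono (show k + 2 ≤ r by omega)
      obtain ⟨n', he, -⟩ :=
        exists_blockStart_eq_F_add (n := n) (show k ≤ r by omega) (by omega) (by omega)
      exact ih r (by omega) n' ⟨by omega, by omega⟩

theorem two_mul_F_notMem_Ioo_blockStart (m : ℕ) {k n : ℕ} (hpos : 0 < blockStart k n) :
    2 * F m ∉ Set.Ioo (blockStart k n + F (k + 1)) (blockStart k n + F (k + 2)) := by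
  rintro ⟨hlo, hhi⟩
  have hx := F_succ_le_blockStart hpos
  have hk₂ : F (k + 2) = F (k + 1) + F k := F_add_two k
  have hmk : k + 2 ≤ m := by
    by_contra! hm
    have := F_mono (show m ≤ k + 1 by omega)
    omega
  obtain ⟨q, rfl⟩ : ∃ q, m = q + 2 := ⟨m - 2, by omega⟩
  have hq₂ : F (q + 2) = F (q + 1) + F q := F_add_two q
  have hq₃ : F (q + 3) = F (q + 2) + F (q + 1) := F_add_two (q + 1)
  have hq₄ : F (q + 4) = F (q + 3) + F (q + 2) := F_add_two (q + 2)
  have hFm : F (q + 2) ≤ blockStart k n := by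
    have := F_mono hmk
    omega
  rcases lt_or_ge (blockStart k n) (F (q + 3)) with hlt | hge
  · obtain ⟨n', he, -⟩ : ∃ n', blockStart k n = F (q + 2) + blockStart k n' ∧ _ :=
      exists_blockStart_eq_F_add (show k ≤ q + 1 by omega) hFm hlt
    exact F_notMem_Ioo_blockStart (q + 2) k n' ⟨by omega, by omega⟩
  · obtain ⟨n', he, -⟩ : ∃ n', blockStart k n = F (q + 3) + blockStart k n' ∧ _ :=
      exists_blockStart_eq_F_add (j := q + 2) (by omega) hge (show _ < F (q + 4) by omega)
    exact F_notMem_Ioo_blockStart q k n' ⟨by omega, by omega⟩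

theorem isCover_fibPrefix_add {c m j : ℕ} (h : IsCover (fibPrefix c) (fibPrefix m))
    (hj : PrefixOccursAt c j) (hjm : j ≤ m) (hmc : m ≤ j + c) :
    IsCover (fibPrefix c) (fibPrefix (j + c)) := by
  have lift {s : ℕ} (hs : OccursAt (fibPrefix c) (fibPrefix m) s) :
      OccursAt (fibPrefix c) (fibPrefix (j + c)) s := by
    rw [occursAt_fibPrefix_iff] at hs ⊢
    exact ⟨by omega, hs.2⟩
  obtain ⟨⟨s, hs⟩, hcov⟩ := h
  refine ⟨⟨s, lift hs⟩, fun q hq => ?_⟩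
  rw [fibPrefix_length] at hq
  by_cases hqm : q < m
  · obtain ⟨s, hs, hsq, hqs⟩ := hcov q (by simpa using hqm)
    exact ⟨s, lift hs, hsq, hqs⟩
  · exact ⟨j, occursAt_fibPrefix_iff.mpr ⟨le_rfl, hj⟩, by omega, by simp; omega⟩

theorem isCover_fibPrefix_F_succ_add {k c : ℕ} (hk : 1 ≤ k) (h₁ : F (k + 1) ≤ c)
    (h₂ : c + 2 ≤ F (k + 2)) : IsCover (fibPrefix c) (fibPrefix (F (k + 1) + c)) :=
  isCover_fibPrefix_add (IsCover.refl _) ((prefixOccursAt_F_succ hk).mono (by omega)) h₁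
    (Nat.le_add_left _ _)

theorem isCover_fibPrefix_F_add_two_add {k c : ℕ} (hk : 1 ≤ k) (h₁ : F (k + 1) ≤ c)
    (h₂ : c + 2 ≤ F (k + 2)) : IsCover (fibPrefix c) (fibPrefix (F (k + 2) + c)) := by
  have hk₁ : F k ≤ F (k + 1) := F_mono k.le_succ
  have hk₂ : F (k + 2) = F (k + 1) + F k := F_add_two k
  have hk₃ : F (k + 3) = F (k + 2) + F (k + 1) := F_add_two (k + 1)
  exact isCover_fibPrefix_add (isCover_fibPrefix_F_succ_add hk h₁ h₂)
    ((prefixOccursAt_F_add_two hk).mono (by omega)) (by omega) (by omega)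

theorem mem_SFib_iff {ℓ : ℕ} (hℓ : 1 ≤ ℓ) : ℓ ∈ SFib ↔ ∃ m, ℓ + 1 = F m ∨ ℓ + 1 = 2 * F m := by
  have hF : F 0 = 1 ∧ F 1 = 1 ∧ F 2 = 2 ∧ F 3 = 3 := ⟨rfl, rfl, rfl, rfl⟩
  simp only [SFib, Set.mem_union, Set.mem_insert_iff, Set.mem_singleton_iff]
  constructor
  · rintro (((rfl | rfl | rfl | rfl) | ⟨m, -, rfl⟩) | ⟨m, -, rfl⟩)
    · exact ⟨2, by omega⟩
    · exact ⟨3, by omega⟩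
    · exact ⟨2, by omega⟩
    · exact ⟨3, by omega⟩
    · exact ⟨m, Or.inl (by have := F_pos m; omega)⟩
    · exact ⟨m, Or.inr (by have := F_pos m; omega)⟩
  · rintro ⟨m, hm⟩
    by_cases h4 : 4 ≤ m
    · rcases hm with hm | hm
      · exact Or.inl (Or.inr ⟨m, h4, by omega⟩)
      · exact Or.inr ⟨m, h4, by omega⟩
    · refine Or.inl (Or.inl ?_)
      interval_cases m <;> omega

theorem not_superprimitive_fibPrefix_of_notMem_SFib {ℓ : ℕ} (hℓ : 1 ≤ ℓ) (h : ℓ ∉ SFib) :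
    ¬ Superprimitive (fibPrefix ℓ) := by
  simp only [mem_SFib_iff hℓ, not_exists, not_or] at h
  have hF : F 2 = 2 ∧ F 3 = 3 := ⟨rfl, rfl⟩
  have hℓ₂ : 2 ≤ ℓ := by
    have := (h 2).1
    omega
  obtain ⟨k, hk₁, hk₂⟩ := exists_le_lt_succ (f := fun k => 2 * F (k + 1)) (n := ℓ)
    (show 2 * 1 ≤ ℓ by omega)
    ⟨ℓ + 1, show ℓ < 2 * F (ℓ + 2) by have := lt_F_add_two ℓ; omega⟩
  replace hk₂ : ℓ < 2 * F (k + 2) := hk₂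
  have hk : 1 ≤ k := by
    by_contra! hk
    obtain rfl : k = 0 := by omega
    simp only [Nat.zero_add] at hk₂
    have := (h 3).1
    have := (h 2).2
    omega
  have hk₃ : F (k + 3) = F (k + 2) + F (k + 1) := F_add_two (k + 1)
  have := (h (k + 3)).1
  have := (h (k + 2)).2
  have := F_pos (k + 1)
  rintro hsup
  rcases le_or_gt (ℓ + 2) (F (k + 3)) with hlt | hge
  · have hC := isCover_fibPrefix_F_succ_add (c := ℓ - F (k + 1)) hk (by omega) (by omega)
    rw [show F (k + 1) + (ℓ - F (k + 1)) = ℓ by omega] at hC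
    exact hsup ⟨_, hC, by simp; omega⟩
  · have hC := isCover_fibPrefix_F_add_two_add (c := ℓ - F (k + 2)) hk (by omega) (by omega)
    rw [show F (k + 2) + (ℓ - F (k + 2)) = ℓ by omega] at hC
    exact hsup ⟨_, hC, by simp; omega⟩

theorem IsCover.eq_fibPrefix {C : List Bool} {ℓ : ℕ} (h : IsCover C (fibPrefix ℓ)) (hℓ : 0 < ℓ) :
    C = fibPrefix C.length :=
  eq_fibPrefix_of_prefix (h.prefix (List.ne_nil_of_length_pos (by simp; omega)))

theorem exists_eq_blockStart_of_occursAt {k c ℓ s : ℕ} (hk : 1 ≤ k) (hc : F (k + 1) ≤ c + 1)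
    (h : OccursAt (fibPrefix c) (fibPrefix ℓ) s) : ∃ n, s = blockStart k n :=
  exists_eq_blockStart_of_prefixOccursAt hk ((occursAt_fibPrefix_iff.mp h).2.mono (by omega))

theorem superprimitive_fibPrefix {ℓ : ℕ} (hℓ : 1 ≤ ℓ) (h : ∃ m, ℓ + 1 = F m ∨ ℓ + 1 = 2 * F m) :
    Superprimitive (fibPrefix ℓ) := by
  rintro ⟨C, hC, hlt⟩
  obtain ⟨c, rfl⟩ : ∃ c, C = fibPrefix c := ⟨_, hC.eq_fibPrefix hℓ⟩
  have hc := (hC.occursAt_zero (List.ne_nil_of_length_pos (by simp; omega))).2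
  simp only [fibPrefix_length] at hlt hc
  obtain ⟨k, hk₁, hk₂⟩ := exists_le_lt_succ (f := fun k => F (k + 1)) (n := c + 1)
    (show 1 ≤ c + 1 by omega) ⟨c + 2, lt_F_add_two (c + 1)⟩
  replace hk₂ : c + 1 < F (k + 2) := hk₂
  have hk : 1 ≤ k := by
    by_contra! hk
    obtain rfl : k = 0 := by omega
    rw [show F (0 + 2) = 2 from rfl] at hk₂
    omega
  obtain ⟨s, hs, hsc, hcs⟩ := hC.2 c (by simpa using hlt)
  obtain ⟨n, rfl⟩ := exists_eq_blockStart_of_occursAt hk hk₁ hs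
  rw [fibPrefix_length] at hcs
  have := F_succ_le_blockStart (k := k) (n := n) (by omega)
  obtain ⟨t, ht, htℓ, hℓt⟩ := hC.2 (ℓ - 1) (by simp; omega)
  have htend := (occursAt_fibPrefix_iff.mp ht).1
  obtain ⟨n', rfl⟩ := exists_eq_blockStart_of_occursAt hk hk₁ ht
  rw [fibPrefix_length] at hℓt
  obtain ⟨m, hm | hm⟩ := h
  · exact F_notMem_Ioo_blockStart m k n' ⟨by omega, by omega⟩
  · exact two_mul_F_notMem_Ioo_blockStart m (k := k) (n := n') (by omega) ⟨by omega, by omega⟩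

theorem superprimitive_fibPrefix_iff {ℓ : ℕ} (hℓ : 1 ≤ ℓ) :
    Superprimitive (fibPrefix ℓ) ↔ ℓ ∈ SFib :=
  ⟨fun h => by_contra fun hS => not_superprimitive_fibPrefix_of_notMem_SFib hℓ hS h,
    fun h => superprimitive_fibPrefix hℓ ((mem_SFib_iff hℓ).mp h)⟩

/-- (a) For every `ℓ ≥ 1`, the prefix `Fib[0..ℓ)` is superprimitive
(i.e., `Cov_Fib[ℓ] = ℓ`) iff `ℓ ∈ S`; (b) for every `ℓ ≥ 1`, `Cov_Fib[ℓ] ∈ S`. -/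
theorem stmt10 :
    (∀ ℓ, 1 ≤ ℓ →
      ((Superprimitive (fibPrefix ℓ) ↔ ℓ ∈ SFib) ∧ (covFib ℓ = ℓ ↔ ℓ ∈ SFib))) ∧
    (∀ ℓ, 1 ≤ ℓ → covFib ℓ ∈ SFib) := by
  refine ⟨fun ℓ hℓ => ⟨superprimitive_fibPrefix_iff hℓ, ?_⟩, fun ℓ hℓ => ?_⟩
  · rw [covFib, ← superprimitive_fibPrefix_iff hℓ, superprimitive_iff_covLen_eq, fibPrefix_length]
  · -- a shortest cover is a superprimitive prefix
    obtain ⟨C, hC, hlen⟩ := exists_isCover_length_eq_covLen (fibPrefix ℓ)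
    have hsup := hC.superprimitive_of_length_eq_covLen hlen
    have hC₀ := hC.occursAt_zero (List.ne_nil_of_length_pos (by simp; omega))
    rw [hC.eq_fibPrefix hℓ] at hsup
    rw [covFib, ← hlen, ← superprimitive_fibPrefix_iff hC₀.2]
    exact hsup
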